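/- Combining the stability bound and Hoeffding's inequality: under the above assumptions, with probability at least 1 - exp(-2 N_r ε²/(τ₂ - τ₁)²), the approximate solution satisfies ‖u(·;Θ_N^{*,(k)}) - u‖_{2,Ω} ≤ √2 C₁^{-1} (R_k + ε + ‖b(·;Θ_N^{*,(k)})‖²_{2,∂Ω})^{1/2}. -/

import Mathlib

/-!
Stability applied to `uΘ - u` gives `C₁ ‖uΘ - u‖ ≤ ‖L uΘ - s‖ + ‖B uΘ - g‖`, and
`x + y ≤ √2 (x² + y²)^{1/2}`. The interior residual `‖L uΘ - s‖²` is the mean of the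
importance-sampled loss `R_k`, a sample mean of independent variables with values in
`[τ₁, τ₂]`; by Hoeffding's inequality `R_k + ε` falls below that mean with probability at most
`exp (-2 N_r ε² / (τ₂ - τ₁)²)`, and off this event the bound holds.
-/

open MeasureTheory ProbabilityTheory Real Finset

theorem add_le_sqrt_two_mul_sqrt {a b q : ℝ} (ha : 0 ≤ a) (hb : 0 ≤ b)
    (hq : a ^ 2 + b ^ 2 ≤ q) : a + b ≤ √2 * √q := by
  rw [← Real.sqrt_mul zero_le_two, Real.le_sqrt (by positivity) (by nlinarith)]
  nlinarith [add_sq_le (a := a) (b := b)]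

theorem norm_sub_le_of_stability {H V W : Type*} [NormedAddCommGroup H] [Module ℝ H]
    [NormedAddCommGroup V] [Module ℝ V] [NormedAddCommGroup W] [Module ℝ W]
    (L : H →ₗ[ℝ] V) (B : H →ₗ[ℝ] W) {C₁ : ℝ} (hC₁ : 0 < C₁)
    (hstab : ∀ v : H, C₁ * ‖v‖ ≤ ‖L v‖ + ‖B v‖) {u w : H} {q : ℝ}
    (hq : ‖L w - L u‖ ^ 2 + ‖B w - B u‖ ^ 2 ≤ q) :
    ‖w - u‖ ≤ √2 * C₁⁻¹ * √q :=
  calc ‖w - u‖ = C₁⁻¹ * (C₁ * ‖w - u‖) := by field_simp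
    _ ≤ C₁⁻¹ * (‖L w - L u‖ + ‖B w - B u‖) := by
      gcongr
      simpa only [map_sub] using hstab (w - u)
    _ ≤ C₁⁻¹ * (√2 * √q) := by
      gcongr
      exact add_le_sqrt_two_mul_sqrt (norm_nonneg _) (norm_nonneg _) hq
    _ = √2 * C₁⁻¹ * √q := by ring

section Hoeffding

variable {Ω ι : Type*} [MeasurableSpace Ω] {P : Measure Ω} [IsProbabilityMeasure P]
  [Fintype ι] {Y : ι → Ω → ℝ} {a b : ℝ}

theorem measureReal_sum_integral_sub_ge_le_of_mem_Icc (hmeas : ∀ i, Measurable (Y i))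
    (hindep : iIndepFun Y P) (hbound : ∀ i, ∀ᵐ ω ∂P, Y i ω ∈ Set.Icc a b) {t : ℝ} (ht : 0 ≤ t) :
    P.real {ω | t ≤ ∑ i, (P[Y i] - Y i ω)}
      ≤ exp (-2 * t ^ 2 / (Fintype.card ι * (b - a) ^ 2)) := by
  have hsubG : ∀ i ∈ (univ : Finset ι),
      HasSubgaussianMGF (fun ω ↦ P[Y i] - Y i ω) ((‖b - a‖₊ / 2) ^ 2) P := fun i _ ↦ by
    convert (hasSubgaussianMGF_of_mem_Icc (hmeas i).aemeasurable (hbound i)).neg using 1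
    ext ω
    simp
  have hindep' : iIndepFun (fun i ω ↦ P[Y i] - Y i ω) P :=
    hindep.comp (fun i y ↦ ∫ ω, Y i ω ∂P - y) fun _ ↦ by fun_prop
  refine (HasSubgaussianMGF.measure_sum_ge_le_of_iIndepFun hindep' hsubG ht).trans_eq ?_
  congr 1
  simp only [sum_const, card_univ, nsmul_eq_mul]
  push_cast
  rw [show 2 * (Fintype.card ι * (‖b - a‖ / 2) ^ 2) = Fintype.card ι * (b - a) ^ 2 / 2 by
    rw [Real.norm_eq_abs, div_pow, sq_abs]; ring, div_div_eq_mul_div]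
  ring

theorem one_sub_exp_le_measureReal_integral_sampleMean_le (hmeas : ∀ i, Measurable (Y i))
    (hindep : iIndepFun Y P) (hbound : ∀ i, ∀ᵐ ω ∂P, Y i ω ∈ Set.Icc a b) {ε : ℝ} (hε : 0 ≤ ε) :
    1 - exp (-2 * Fintype.card ι * ε ^ 2 / (b - a) ^ 2)
      ≤ P.real {ω | ∫ ω', (1 / (Fintype.card ι : ℝ)) * ∑ i, Y i ω' ∂P
          ≤ (1 / (Fintype.card ι : ℝ)) * ∑ i, Y i ω + ε} := by
  set n : ℝ := (Fintype.card ι : ℝ)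
  set bad := {ω | n * ε ≤ ∑ i, (P[Y i] - Y i ω)}
  have hbad : P.real bad ≤ exp (-2 * n * ε ^ 2 / (b - a) ^ 2) := by
    refine (measureReal_sum_integral_sub_ge_le_of_mem_Icc hmeas hindep hbound (by positivity)).trans_eq ?_
    rcases eq_or_ne n 0 with hn | hn
    · simp [hn]
    · change exp (-2 * (n * ε) ^ 2 / (n * (b - a) ^ 2)) = _
      rw [show -2 * (n * ε) ^ 2 = n * (-2 * n * ε ^ 2) by ring, mul_div_mul_left _ _ hn]
  have hmean : ∫ ω, (1 / n) * ∑ i, Y i ω ∂P = (1 / n) * ∑ i, P[Y i] := by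
    rw [integral_const_mul, integral_finsetSum _ fun i _ ↦
      Integrable.of_mem_Icc a b (hmeas i).aemeasurable (hbound i)]
  have hgood : badᶜ ⊆ {ω | ∫ ω', (1 / n) * ∑ i, Y i ω' ∂P ≤ (1 / n) * ∑ i, Y i ω + ε} := by
    intro ω hω
    simp only [bad, Set.mem_compl_iff, Set.mem_ofPred_eq, not_le, sum_sub_distrib] at hω
    rw [Set.mem_ofPred_eq, hmean]
    rcases eq_or_ne n 0 with hn | hn
    -- `1 / 0 = 0`: over an empty `ι` the sample mean and its integral are both `0`
    · simp [hn, hε]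
    · rw [← sub_le_iff_le_add', ← mul_sub, one_div_mul_eq_div, div_le_iff₀ (by positivity)]
      linarith
  calc 1 - exp (-2 * n * ε ^ 2 / (b - a) ^ 2) ≤ 1 - P.real bad := by linarith
    _ = P.real badᶜ :=
      (probReal_compl_eq_one_sub (measurableSet_le (by fun_prop) (by fun_prop))).symm
    _ ≤ _ := measureReal_mono hgood

end Hoeffding

theorem das_error_bound_general
    {H V W Ω' : Type*} [NormedAddCommGroup H] [NormedSpace ℝ H]
    [NormedAddCommGroup V] [NormedAddCommGroup W]
    [NormedSpace ℝ V] [NormedSpace ℝ W] [MeasurableSpace Ω']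
    (L : H →ₗ[ℝ] V) (B : H →ₗ[ℝ] W)
    (C₁ : ℝ) (hC₁ : 0 < C₁)
    (hstab : ∀ v : H, C₁ * ‖v‖ ≤ ‖L v‖ + ‖B v‖)
    (u uΘ : H) (s : V) (g : W) (hu : L u = s) (hg : B u = g)
    (P : Measure Ω') [IsProbabilityMeasure P]
    (Nr : ℕ) (Y : Fin Nr → Ω' → ℝ)
    (hmeas : ∀ i, Measurable (Y i))
    (hindep : iIndepFun Y P)
    (τ₁ τ₂ : ℝ)
    (hbound : ∀ i, ∀ᵐ ω ∂P, Y i ω ∈ Set.Icc τ₁ τ₂)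
    (Rk : Ω' → ℝ) (hRk : Rk = fun ω => (1 / (Nr : ℝ)) * ∑ i, Y i ω)
    (hERk : ∫ ω, Rk ω ∂P = ‖L uΘ - s‖ ^ 2)
    (ε : ℝ) (hε : 0 < ε) :
    1 - Real.exp (-2 * Nr * ε ^ 2 / (τ₂ - τ₁) ^ 2)
      ≤ (P {ω | ‖uΘ - u‖
            ≤ Real.sqrt 2 * C₁⁻¹
                * Real.sqrt (Rk ω + ε + ‖B uΘ - g‖ ^ 2)}).toReal := by
  subst hRk
  have hsample := one_sub_exp_le_measureReal_integral_sampleMean_le hmeas hindep hbound hε.le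
  rw [Fintype.card_fin, hERk] at hsample
  refine hsample.trans (measureReal_mono fun ω hω ↦ ?_)
  refine norm_sub_le_of_stability L B hC₁ hstab ?_
  rw [hu, hg]
  linarith [hω.out]

/-- Theorem 1: combining the stability bound with Hoeffding's inequality, with
probability at least `1 - exp(-2 N_r ε²/(τ₂ - τ₁)²)` the approximate solution satisfies
`‖u_Θ - u‖ ≤ √2 C₁⁻¹ (R_k + ε + ‖b‖²)^{1/2}`. -/
theorem das_error_bound
    {H V W Ω' : Type*} [NormedAddCommGroup H] [NormedSpace ℝ H]
    [NormedAddCommGroup V] [NormedAddCommGroup W]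
    [NormedSpace ℝ V] [NormedSpace ℝ W] [MeasurableSpace Ω']
    (L : H →ₗ[ℝ] V) (B : H →ₗ[ℝ] W)
    (C₁ : ℝ) (hC₁ : 0 < C₁)
    (hstab : ∀ v : H, C₁ * ‖v‖ ≤ ‖L v‖ + ‖B v‖)
    (u uΘ : H) (s : V) (g : W) (hu : L u = s) (hg : B u = g)
    (P : Measure Ω') [IsProbabilityMeasure P]
    (Nr : ℕ) (hNr : 0 < Nr) (Y : Fin Nr → Ω' → ℝ)
    (hmeas : ∀ i, Measurable (Y i))
    (hindep : iIndepFun Y P)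
    (hident : ∀ i j, Measure.map (Y i) P = Measure.map (Y j) P)
    (τ₁ τ₂ : ℝ) (hτ : τ₁ < τ₂)
    (hbound : ∀ i, ∀ᵐ ω ∂P, Y i ω ∈ Set.Icc τ₁ τ₂)
    (Rk : Ω' → ℝ) (hRk : Rk = fun ω => (1 / (Nr : ℝ)) * ∑ i, Y i ω)
    (hERk : ∫ ω, Rk ω ∂P = ‖L uΘ - s‖ ^ 2)
    (ε : ℝ) (hε : 0 < ε) (hε1 : ε < 1) :
    1 - Real.exp (-2 * Nr * ε ^ 2 / (τ₂ - τ₁) ^ 2)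
      ≤ (P {ω | ‖uΘ - u‖
            ≤ Real.sqrt 2 * C₁⁻¹
                * Real.sqrt (Rk ω + ε + ‖B uΘ - g‖ ^ 2)}).toReal :=
  das_error_bound_general L B C₁ hC₁ hstab u uΘ s g hu hg P Nr Y hmeas hindep τ₁ τ₂ hbound Rk hRk
    hERk ε hε
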